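/- A cycle C_n with threshold function t has a pervading link set with k external influencers if and only if: (1) at least one node has threshold at most k, (2) every node has threshold at most k+2, and (3) between any two consecutive nodes of threshold k+2 (along the cycle), there is at least one node of threshold at most k. -/

import Mathlib

open Finset
open scoped Classical

/-- Threshold activation process: `act G t s j` is the set of nodes active at step `j`,
given link vector `s` (partial incentives from external influencers). -/
noncomputable def act {V : Type*} [Fintype V] (G : SimpleGraph V) (t s : V → ℕ) :
    ℕ → Finset V
  | 0 => Finset.univ.filter (fun v => t v ≤ s v)
  | (j+1) => act G t s j ∪ Finset.univ.filter
      (fun v => t v ≤ s v + ((act G t s j).filter (fun u => G.Adj u v)).card)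

/-- A link vector `s` is pervading for `(G, t)` with `k` external influencers if each node
receives at most `k` links and the process eventually activates every node. -/
def Pervading {V : Type*} [Fintype V] (G : SimpleGraph V) (t s : V → ℕ) (k : ℕ) : Prop :=
  (∀ v, s v ≤ k) ∧ ∃ j, act G t s j = Finset.univ

/-- The cycle graph on `ZMod n`: `i` is adjacent to `i ± 1`. -/
def cycleGraph (n : ℕ) : SimpleGraph (ZMod n) :=
  SimpleGraph.fromRel (fun i j => j = i + 1)

/-- `v` lies strictly between `i` and `j` in the clockwise direction on `ZMod n`. -/
def Between {n : ℕ} [NeZero n] (i j v : ZMod n) : Prop :=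
  0 < (v - i).val ∧ (v - i).val < (j - i).val

/-!
Call a set `S` of nodes blocking if every `v ∈ S` has `t v > s v + #(neighbours of v outside S)`.
A blocking set never receives an active node, while the nodes that never become active form a
blocking set once the process stabilises; so `s` activates everything iff every blocking set is
empty. On the cycle with `s ≤ k`: if (1) fails the whole cycle is blocking, if (2) fails some
node is blocking on its own, and if (3) fails the closed arc between two consecutive nodes of
threshold `k + 2` is blocking. Conversely take `s = min t k`. A nonempty blocking set `S` is not
the whole cycle by (1), so it contains some `v` with `v - 1 ∉ S`; then `t v = k + 2` and
`v + 1 ∈ S`, and walking clockwise through nodes of threshold `k + 1`, which `S` contains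
together with both neighbours, reaches the next node of threshold `k + 2` with nothing of
threshold `≤ k` in between, against (3) (or against (1) if the walk goes all the way round).
-/

section Activation

variable {V : Type*} [Fintype V]

def IsBlockingSet (G : SimpleGraph V) (t s : V → ℕ) (S : Finset V) : Prop :=
  ∀ v ∈ S, s v + #{u | G.Adj u v ∧ u ∉ S} < t v

variable {G : SimpleGraph V} {t s : V → ℕ}

lemma mem_act_zero {v : V} : v ∈ act G t s 0 ↔ t v ≤ s v := by
  simp [act]

lemma mem_act_succ {v : V} {j : ℕ} :
    v ∈ act G t s (j + 1) ↔
      v ∈ act G t s j ∨ t v ≤ s v + #{u ∈ act G t s j | G.Adj u v} := by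
  simp [act]

lemma act_mono : Monotone (act G t s) :=
  monotone_nat_of_le_succ fun _ _ hv => mem_act_succ.2 (Or.inl hv)

lemma IsBlockingSet.disjoint_act {S : Finset V} (hS : IsBlockingSet G t s S) (j : ℕ) :
    Disjoint (act G t s j) S := by
  induction j with
  | zero =>
    refine disjoint_right.2 fun v hv hact => ?_
    have := hS v hv
    rw [mem_act_zero] at hact
    omega
  | succ j ih =>
    refine disjoint_right.2 fun v hv hact => ?_
    rcases mem_act_succ.1 hact with hact | hact
    · exact disjoint_right.1 ih hv hact
    · have hsub : {u ∈ act G t s j | G.Adj u v} ⊆ ({u | G.Adj u v ∧ u ∉ S} : Finset V) :=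
        fun u hu => by
          rw [mem_filter] at hu
          exact mem_filter.2 ⟨mem_univ u, hu.2, disjoint_left.1 ih hu.1⟩
      have := card_le_card hsub
      have := hS v hv
      omega

lemma isBlockingSet_compl_act {j : ℕ} (hj : act G t s (j + 1) = act G t s j) :
    IsBlockingSet G t s (act G t s j)ᶜ := by
  intro v hv
  have hv' : v ∉ act G t s (j + 1) := hj ▸ mem_compl.1 hv
  have hout : ({u | G.Adj u v ∧ u ∉ (act G t s j)ᶜ} : Finset V) =
      {u ∈ act G t s j | G.Adj u v} := by
    ext u
    simp [and_comm]
  rw [mem_act_succ, not_or] at hv'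
  rw [hout]
  exact not_le.1 hv'.2

theorem exists_act_eq_univ_iff :
    (∃ j, act G t s j = univ) ↔ ∀ S, IsBlockingSet G t s S → S = ∅ := by
  constructor
  · rintro ⟨j, hj⟩ S hS
    simpa [hj, disjoint_iff_inter_eq_empty] using hS.disjoint_act j
  · intro h
    obtain ⟨j, hj⟩ := WellFoundedGT.monotone_chain_condition ⟨act G t s, act_mono⟩
    have hstable := isBlockingSet_compl_act (hj (j + 1) j.le_succ).symm
    exact ⟨j, (compl_eq_empty_iff _).1 (h _ hstable)⟩

lemma exists_le_of_forall_isBlockingSet [Nonempty V]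
    (hblock : ∀ S, IsBlockingSet G t s S → S = ∅) : ∃ v, t v ≤ s v := by
  by_contra! h
  refine univ_nonempty.ne_empty (hblock univ fun v _ => ?_)
  simpa using h v

end Activation

namespace ZMod

variable {n : ℕ}

lemma val_sub_one_of_pos [NeZero n] {x : ZMod n} (hx : 0 < x.val) : (x - 1).val = x.val - 1 := by
  have h1 : (1 : ZMod n).val = 1 := by
    rw [val_one_eq_one_mod, Nat.mod_eq_of_lt (by have := x.val_lt; omega)]
  rw [val_sub (by omega), h1]

lemma val_add_one_of_lt {x : ZMod n} (hx : x.val + 1 < n) : (x + 1).val = x.val + 1 := by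
  have h1 : (1 : ZMod n).val = 1 := by rw [val_one_eq_one_mod, Nat.mod_eq_of_lt (by omega)]
  rw [val_add_of_lt (by omega), h1]

lemma two_ne_zero_of_three_le (hn : 3 ≤ n) : (2 : ZMod n) ≠ 0 := by
  intro h
  have := Nat.le_of_dvd two_pos ((natCast_eq_zero_iff 2 n).1 (by exact_mod_cast h))
  omega

lemma add_natCast_val_sub [NeZero n] (u v : ZMod n) : v + ((u - v).val : ZMod n) = u := by
  rw [natCast_zmod_val, add_sub_cancel]

lemma exists_mem_sub_one_notMem [NeZero n] {S : Finset (ZMod n)} (hne : S.Nonempty)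
    (hS : S ≠ univ) : ∃ v ∈ S, v - 1 ∉ S := by
  by_contra! h
  obtain ⟨v, hv⟩ := hne
  have hsub : ∀ m : ℕ, v - m ∈ S := by
    intro m
    induction m with
    | zero => simpa using hv
    | succ m ih => simpa [sub_sub] using h _ ih
  exact hS (eq_univ_of_forall fun u => by simpa using hsub (v - u).val)

lemma add_natCast_mem_of_run {p : ZMod n → Prop} {S : Finset (ZMod n)} {v : ZMod n} {d : ℕ}
    (hv : v ∈ S) (hv₁ : v + 1 ∈ S) (hstep : ∀ u ∈ S, p u → u + 1 ∈ S)
    (hrun : ∀ m : ℕ, 0 < m → m < d → p (v + m)) : ∀ m ≤ d, v + m ∈ S := by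
  intro m hm
  induction m with
  | zero => simpa using hv
  | succ m ih =>
    rcases m.eq_zero_or_pos with rfl | hm₀
    · simpa using hv₁
    · rw [Nat.cast_succ, ← add_assoc]
      exact hstep _ (ih (by omega)) (hrun m hm₀ (by omega))

end ZMod

lemma card_pair_sdiff_le_one {α : Type*} [DecidableEq α] {a b : α} {S : Finset α}
    (h : a ∈ S ∨ b ∈ S) : #({a, b} \ S) ≤ 1 := by
  refine card_le_one.2 fun x hx y hy => ?_
  simp only [mem_sdiff, mem_insert, mem_singleton] at hx hy
  grind

section Cycle

variable {n : ℕ}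

lemma cycleGraph_adj_iff (hn : 1 < n) {u v : ZMod n} :
    (cycleGraph n).Adj u v ↔ u = v - 1 ∨ u = v + 1 := by
  have : Fact (1 < n) := ⟨hn⟩
  rw [cycleGraph, SimpleGraph.fromRel_adj, eq_sub_iff_add_eq, eq_comm (a := v)]
  constructor
  · rintro ⟨-, h | h⟩ <;> simp [h]
  · rintro (h | rfl)
    · exact ⟨by rintro rfl; simp at h, Or.inl h⟩
    · exact ⟨by simp, Or.inr rfl⟩

variable [NeZero n] {t s : ZMod n → ℕ} {k : ℕ}

lemma isBlockingSet_cycleGraph_iff (hn : 1 < n) {S : Finset (ZMod n)} :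
    IsBlockingSet (cycleGraph n) t s S ↔ ∀ v ∈ S, s v + #({v - 1, v + 1} \ S) < t v := by
  have hout (v : ZMod n) : ({u | (cycleGraph n).Adj u v ∧ u ∉ S} : Finset (ZMod n)) =
      {v - 1, v + 1} \ S := by
    ext u
    simp [cycleGraph_adj_iff hn]
  refine forall₂_congr fun v _ => ?_
  rw [← hout]
  -- the two filters differ only in their decidability instances
  convert Iff.rfl

lemma le_add_two_of_forall_isBlockingSet (hn : 1 < n) (hs : ∀ v, s v ≤ k)
    (hblock : ∀ S, IsBlockingSet (cycleGraph n) t s S → S = ∅) (v : ZMod n) :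
    t v ≤ k + 2 := by
  by_contra! hv
  refine singleton_ne_empty v (hblock _ ?_)
  rw [isBlockingSet_cycleGraph_iff hn]
  intro u hu
  rw [mem_singleton] at hu
  subst hu
  have : #({u - 1, u + 1} \ {u}) ≤ 2 := (card_le_card sdiff_subset).trans card_le_two
  have := hs u
  omega

lemma exists_between_le_of_forall_isBlockingSet (hn : 1 < n) (hs : ∀ v, s v ≤ k)
    (hblock : ∀ S, IsBlockingSet (cycleGraph n) t s S → S = ∅) (h2 : ∀ v, t v ≤ k + 2)
    {i j : ZMod n} (hi : t i = k + 2) (hj : t j = k + 2) (hij : i ≠ j)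
    (hgap : ∀ v, Between i j v → t v ≠ k + 2) : ∃ v, Between i j v ∧ t v ≤ k := by
  by_contra! hgt
  set D := (j - i).val
  have hD : 0 < D := ZMod.val_pos.2 (sub_ne_zero.2 hij.symm)
  let arc : Finset (ZMod n) := {u | (u - i).val ≤ D}
  have hsucc (u : ZMod n) (hu : (u - i).val < D) : u + 1 ∈ arc := by
    have := (j - i).val_lt
    simp only [arc, mem_filter, mem_univ, true_and]
    rw [add_sub_right_comm, ZMod.val_add_one_of_lt (by omega)]
    omega
  have hpred (u : ZMod n) (hu₀ : 0 < (u - i).val) (hu : (u - i).val ≤ D) : u - 1 ∈ arc := by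
    simp only [arc, mem_filter, mem_univ, true_and]
    rw [sub_right_comm, ZMod.val_sub_one_of_pos hu₀]
    omega
  have harc : IsBlockingSet (cycleGraph n) t s arc := by
    rw [isBlockingSet_cycleGraph_iff hn]
    intro u hu
    simp only [arc, mem_filter, mem_univ, true_and] at hu
    have hsu := hs u
    rcases (u - i).val.eq_zero_or_pos with h0 | hpos
    · have htu : t u = k + 2 := sub_eq_zero.1 ((ZMod.val_eq_zero _).1 h0) ▸ hi
      have : #({u - 1, u + 1} \ arc) ≤ 1 := card_pair_sdiff_le_one (Or.inr (hsucc u (by omega)))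
      omega
    rcases hu.lt_or_eq with hlt | heq
    · have htu : t u = k + 1 := by
        have := hgap u ⟨hpos, hlt⟩
        have := hgt u ⟨hpos, hlt⟩
        have := h2 u
        omega
      have hsub : {u - 1, u + 1} ⊆ arc :=
        insert_subset_iff.2 ⟨hpred u hpos hu, singleton_subset_iff.2 (hsucc u hlt)⟩
      rw [sdiff_eq_empty_iff_subset.2 hsub, card_empty]
      omega
    · have htu : t u = k + 2 := sub_left_inj.1 (ZMod.val_injective n heq) ▸ hj
      have : #({u - 1, u + 1} \ arc) ≤ 1 := card_pair_sdiff_le_one (Or.inl (hpred u hpos hu))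
      omega
  exact eq_empty_iff_forall_notMem.1 (hblock _ harc) i (by simp [arc])

lemma add_natCast_ne_of_run (h1 : ∃ v, t v ≤ k)
    (h3 : ∀ i j : ZMod n, t i = k + 2 → t j = k + 2 → i ≠ j →
      (∀ v, Between i j v → t v ≠ k + 2) → ∃ v, Between i j v ∧ t v ≤ k)
    {v : ZMod n} {d : ℕ} (hv : t v = k + 2) (hd₀ : 0 < d) (hd : d ≤ n)
    (hrun : ∀ m : ℕ, 0 < m → m < d → t (v + m) = k + 1) : t (v + d) ≠ k + 2 := by
  intro hvd
  have hoffset (u : ZMod n) (hu₀ : 0 < (u - v).val) (hu : (u - v).val < d) : t u = k + 1 := by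
    simpa only [ZMod.add_natCast_val_sub] using hrun _ hu₀ hu
  rcases hd.lt_or_eq with hlt | rfl
  · have hval : (v + d - v).val = d := by
      rw [add_sub_cancel_left, ZMod.val_natCast, Nat.mod_eq_of_lt hlt]
    have hne : v ≠ v + d := fun h => by rw [← h, sub_self, ZMod.val_zero] at hval; omega
    obtain ⟨u, ⟨hu₀, hu⟩, hle⟩ := h3 v (v + d) hv hvd hne fun u ⟨hu₀, hu⟩ => by
      rw [hoffset u hu₀ (hval ▸ hu)]
      omega
    have := hoffset u hu₀ (hval ▸ hu)
    omega
  · obtain ⟨u, hu⟩ := h1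
    have huv : u ≠ v := fun h => by rw [h] at hu; omega
    have := hoffset u (ZMod.val_pos.2 (sub_ne_zero.2 huv)) (u - v).val_lt
    omega

lemma add_one_notMem_of_eq_add_two (h1 : ∃ v, t v ≤ k) (h2 : ∀ v, t v ≤ k + 2)
    (h3 : ∀ i j : ZMod n, t i = k + 2 → t j = k + 2 → i ≠ j →
      (∀ v, Between i j v → t v ≠ k + 2) → ∃ v, Between i j v ∧ t v ≤ k)
    {S : Finset (ZMod n)} (hgt : ∀ u ∈ S, k < t u)
    (hstep : ∀ u ∈ S, t u = k + 1 → u + 1 ∈ S)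
    {v : ZMod n} (hv : v ∈ S) (hv₂ : t v = k + 2) : v + 1 ∉ S := by
  intro hv₁
  have hwalk : ∃ d : ℕ, 0 < d ∧ t (v + d) ≠ k + 1 := ⟨n, NeZero.pos n, by simp [hv₂]⟩
  obtain ⟨hd₀, hd⟩ := Nat.find_spec hwalk
  have hrun (m : ℕ) (hm₀ : 0 < m) (hm : m < Nat.find hwalk) : t (v + m) = k + 1 := by
    have := Nat.find_min hwalk hm
    omega
  have hmem := ZMod.add_natCast_mem_of_run hv hv₁ hstep hrun _ le_rfl
  have := hgt _ hmem
  have := h2 (v + Nat.find hwalk)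
  have hdn : Nat.find hwalk ≤ n := Nat.find_le ⟨NeZero.pos n, by simp [hv₂]⟩
  exact add_natCast_ne_of_run h1 h3 hv₂ hd₀ hdn hrun (by omega)

lemma eq_empty_of_isBlockingSet_min (hn : 3 ≤ n) (h1 : ∃ v, t v ≤ k)
    (h2 : ∀ v, t v ≤ k + 2)
    (h3 : ∀ i j : ZMod n, t i = k + 2 → t j = k + 2 → i ≠ j →
      (∀ v, Between i j v → t v ≠ k + 2) → ∃ v, Between i j v ∧ t v ≤ k)
    {S : Finset (ZMod n)} (hS : IsBlockingSet (cycleGraph n) t (fun v => min (t v) k) S) :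
    S = ∅ := by
  rw [isBlockingSet_cycleGraph_iff (by omega)] at hS
  have hgt (v : ZMod n) (hv : v ∈ S) : k < t v := by
    have := hS v hv
    omega
  have hflat (v : ZMod n) (hv : v ∈ S) (htv : t v = k + 1) : v - 1 ∈ S ∧ v + 1 ∈ S := by
    have hcard : #({v - 1, v + 1} \ S) = 0 := by
      have := hS v hv
      omega
    have hsub := sdiff_eq_empty_iff_subset.1 (card_eq_zero.1 hcard)
    exact ⟨hsub (by simp), hsub (by simp)⟩
  by_contra hne
  have hS_ne_univ : S ≠ univ := fun h => by
    obtain ⟨u, hu⟩ := h1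
    have := hgt u (h ▸ mem_univ u)
    omega
  obtain ⟨v, hv, hv'⟩ := ZMod.exists_mem_sub_one_notMem (nonempty_iff_ne_empty.2 hne) hS_ne_univ
  have htv : t v = k + 2 := by
    have := hgt v hv
    have := h2 v
    have : t v ≠ k + 1 := fun h => hv' (hflat v hv h).1
    omega
  refine add_one_notMem_of_eq_add_two h1 h2 h3 hgt (fun u hu h => (hflat u hu h).2) hv htv ?_
  by_contra hv''
  have hout : {v - 1, v + 1} \ S = {v - 1, v + 1} := by
    ext u
    simp only [mem_sdiff, mem_insert, mem_singleton]
    grind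
  have hpair : #{v - 1, v + 1} = 2 :=
    card_pair fun h => ZMod.two_ne_zero_of_three_le hn (by linear_combination -h)
  have := hS v hv
  rw [hout, hpair] at this
  omega

end Cycle

theorem cycle_pervading_iff (n k : ℕ) [NeZero n] (hn : 3 ≤ n) (t : ZMod n → ℕ) :
    (∃ s, Pervading (cycleGraph n) t s k) ↔
      ((∃ v, t v ≤ k) ∧ (∀ v, t v ≤ k + 2) ∧
        (∀ i j : ZMod n, t i = k + 2 → t j = k + 2 → i ≠ j →
          (∀ v, Between i j v → t v ≠ k + 2) →
          ∃ v, Between i j v ∧ t v ≤ k)) := by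
  constructor
  · rintro ⟨s, hs, hact⟩
    have hblock := exists_act_eq_univ_iff.1 hact
    obtain ⟨v, hv⟩ := exists_le_of_forall_isBlockingSet hblock
    have h2 := le_add_two_of_forall_isBlockingSet (by omega) hs hblock
    exact ⟨⟨v, hv.trans (hs v)⟩, h2,
      fun i j => exists_between_le_of_forall_isBlockingSet (by omega) hs hblock h2⟩
  · rintro ⟨h1, h2, h3⟩
    exact ⟨fun v => min (t v) k, fun v => min_le_right _ _,
      exists_act_eq_univ_iff.2 fun S => eq_empty_of_isBlockingSet_min hn h1 h2 h3⟩
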